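/- arXiv:1706.08623 — 2 statements merged into one kernel-verified Lean document; each statement's English description precedes it below -/
import Mathlib

section
/- Dynamics on the separatrix branch W₂ (trajectories through the focus (−c, 0)): let ξ₀ > 0, let φ₀ = 2 arctan ξ₀ ∈ (0, π), and let θ₀ ∈ (0, π/2) be the unique angle with tan θ₀ = b(1 + ξ₀²)/(2 c ξ₀). Then for every integer n ≥ 0, the n-th iterate of the static billiard map satisfies B_sⁿ(φ₀, θ₀) = (φ_n, θ_n) (mod π), where φ_n = 2 arctan(λ^{−n} ξ₀) and θ_n ∈ (0, π/2) is the unique angle with tan θ_n = b(1 + λ^{−2n} ξ₀²)/(2 c λ^{−n} ξ₀). -/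
/-!
Parametrize `W₂` by `ξ > 0` through `φ = 2 arctan ξ`, `tan θ = b (1 + ξ²) / (2 c ξ)`. Then
`tan φ = 2ξ / (1 - ξ²)`, and with `b² = a² - c²` the argument of the arctan in the formula for
`φ₁` collapses to `R = ((a - c) ξ² - (a + c)) / (2 a ξ)`. For `ξ' = ξ / λ` one has
`1 - ξ ξ' + R (ξ + ξ') = 0`, which is the addition formula for the tangent in disguise and gives
`φ₁ ≡ 2 arctan ξ' (mod π)`; the formula for `θ₁` likewise reduces to a polynomial identity and
gives `tan θ₁ = b (1 + ξ'²) / (2 c ξ')`. These computations need `tan φ` and `tan φ₁` to be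
finite, i.e. `ξ ≠ 1` and `ξ ≠ λ`; at these two parameters the step follows by continuity of
`B_s`, since both sides are continuous in `ξ` modulo `π`. Induction on `n` finishes the proof.
-/

open Real AddCommGroup Filter Topology

lemma sin_two_arctan (x : ℝ) : sin (2 * arctan x) = 2 * x / (1 + x ^ 2) := by
  have h : √(1 + x ^ 2) ^ 2 = 1 + x ^ 2 := sq_sqrt (by positivity)
  rw [sin_two_mul, sin_arctan, cos_arctan]
  field_simp
  rw [h]

lemma cos_two_arctan (x : ℝ) : cos (2 * arctan x) = (1 - x ^ 2) / (1 + x ^ 2) := by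
  have h : √(1 + x ^ 2) ^ 2 = 1 + x ^ 2 := sq_sqrt (by positivity)
  rw [cos_two_mul, cos_arctan]
  field_simp
  linarith

lemma sin_arctan_eq_mul_cos_arctan (x : ℝ) : sin (arctan x) = x * cos (arctan x) := by
  rw [sin_arctan, cos_arctan]; ring

lemma modEq_pi_iff_sin_sub_eq_zero {x y : ℝ} : x ≡ y [PMOD π] ↔ sin (y - x) = 0 := by
  simp [modEq_iff_zsmul, sin_eq_zero_iff, zsmul_eq_mul]

lemma modEq_pi_iff_exists_eq_add_int_mul {x y : ℝ} :
    x ≡ y [PMOD π] ↔ ∃ k : ℤ, y = x + k * π := by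
  simp [modEq_iff_eq_add_zsmul, zsmul_eq_mul]

lemma tan_eq_of_modEq_pi {x y : ℝ} (h : x ≡ y [PMOD π]) : tan x = tan y := by
  obtain ⟨k, rfl⟩ := modEq_iff_eq_add_zsmul.1 h.symm
  rw [zsmul_eq_mul, tan_add_int_mul_pi]

lemma cos_ne_zero_of_modEq_pi {x y : ℝ} (h : x ≡ y [PMOD π]) (hy : cos y ≠ 0) : cos x ≠ 0 := by
  obtain ⟨k, rfl⟩ := modEq_iff_eq_add_zsmul.1 h.symm
  rw [zsmul_eq_mul, cos_add_int_mul_pi]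
  exact mul_ne_zero (zpow_ne_zero _ (by norm_num)) hy

lemma sin_ne_zero_of_modEq_pi {x y : ℝ} (h : x ≡ y [PMOD π]) (hy : sin y ≠ 0) : sin x ≠ 0 := by
  obtain ⟨k, rfl⟩ := modEq_iff_eq_add_zsmul.1 h.symm
  rw [zsmul_eq_mul, sin_add_int_mul_pi]
  exact mul_ne_zero (zpow_ne_zero _ (by norm_num)) hy

lemma modEq_pi_of_eventually_nhdsNE {X : Type*} [TopologicalSpace X] {f g : X → ℝ} {x : X}
    [(𝓝[≠] x).NeBot] (hf : ContinuousAt f x)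
    (hg : ContinuousAt g x) (h : ∀ᶠ y in 𝓝[≠] x, f y ≡ g y [PMOD π]) : f x ≡ g x [PMOD π] := by
  simp only [modEq_pi_iff_sin_sub_eq_zero] at h ⊢
  have hu : ContinuousAt (fun y ↦ sin (g y - f y)) x := continuous_sin.continuousAt.comp (hg.sub hf)
  exact ((hu.eventuallyEq_nhds_iff_eventuallyEq_nhdsNE continuousAt_const).1 h).eq_of_nhds

section TwoArctan

variable {φ ξ : ℝ}

lemma tan_eq_of_modEq_two_arctan (h : φ ≡ 2 * arctan ξ [PMOD π]) :
    tan φ = 2 * ξ / (1 - ξ ^ 2) := by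
  rw [tan_eq_of_modEq_pi h, tan_two_mul, tan_arctan]

lemma cos_ne_zero_of_modEq_two_arctan (h : φ ≡ 2 * arctan ξ [PMOD π]) (hξ : 1 - ξ ^ 2 ≠ 0) :
    cos φ ≠ 0 := by
  refine cos_ne_zero_of_modEq_pi h ?_
  rw [cos_two_arctan]
  exact div_ne_zero hξ (by positivity)

lemma sin_ne_zero_of_modEq_two_arctan (h : φ ≡ 2 * arctan ξ [PMOD π]) (hξ : ξ ≠ 0) :
    sin φ ≠ 0 := by
  refine sin_ne_zero_of_modEq_pi h ?_
  rw [sin_two_arctan]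
  exact div_ne_zero (mul_ne_zero two_ne_zero hξ) (by positivity)

end TwoArctan

lemma two_arctan_modEq_of {x y z : ℝ} (h : 1 - x * y + z * (x + y) = 0) :
    2 * arctan z ≡ 2 * arctan x + 2 * arctan y [PMOD π] := by
  -- `h` says that `z = -cot (arctan x + arctan y)`, so `arctan z ≡ arctan x + arctan y + π / 2`.
  have hcos : cos (arctan z - (arctan x + arctan y)) = 0 := by
    rw [cos_sub, cos_add, sin_add, sin_arctan_eq_mul_cos_arctan z,
      sin_arctan_eq_mul_cos_arctan x, sin_arctan_eq_mul_cos_arctan y]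
    linear_combination cos (arctan z) * cos (arctan x) * cos (arctan y) * h
  rw [modEq_pi_iff_sin_sub_eq_zero]
  calc sin (2 * arctan x + 2 * arctan y - 2 * arctan z)
      = -(2 * sin (arctan z - (arctan x + arctan y)) * cos (arctan z - (arctan x + arctan y))) := by
        rw [← sin_two_mul, ← sin_neg]; ring_nf
    _ = 0 := by rw [hcos]; ring

lemma arctan_sub_arctan_modEq_of {w t w' t' : ℝ}
    (h : (w - t) * (1 - w' * t') = (1 + w * t) * (w' + t')) :
    arctan w - arctan t ≡ arctan w' + arctan t' [PMOD π] := by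
  rw [modEq_pi_iff_sin_sub_eq_zero, sin_sub, sin_sub, cos_sub, sin_add, cos_add,
    sin_arctan_eq_mul_cos_arctan w, sin_arctan_eq_mul_cos_arctan t,
    sin_arctan_eq_mul_cos_arctan w', sin_arctan_eq_mul_cos_arctan t']
  linear_combination
    -cos (arctan w) * cos (arctan t) * cos (arctan w') * cos (arctan t') * h

noncomputable def separatrixTan (b c ξ : ℝ) : ℝ := b * (1 + ξ ^ 2) / (2 * c * ξ)

section Algebra

variable {a b c ξ ξ' : ℝ}

lemma separatrix_denom_eq (hc : c ≠ 0) (hξ : ξ ≠ 0) (hξ1 : 1 - ξ ^ 2 ≠ 0) :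
    b - a * (2 * ξ / (1 - ξ ^ 2)) * separatrixTan b c ξ
      = b * ((c - a) - (c + a) * ξ ^ 2) / (c * (1 - ξ ^ 2)) := by
  unfold separatrixTan
  field_simp
  ring

lemma separatrix_denom_ne_zero (hb : 0 < b) (hc : 0 < c) (hca : c < a) (hξ : 0 < ξ)
    (hξ1 : 1 - ξ ^ 2 ≠ 0) : b - a * (2 * ξ / (1 - ξ ^ 2)) * separatrixTan b c ξ ≠ 0 := by
  rw [separatrix_denom_eq hc.ne' hξ.ne' hξ1]
  have : (c - a) - (c + a) * ξ ^ 2 < 0 := by nlinarith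
  exact div_ne_zero (mul_ne_zero hb.ne' this.ne) (mul_ne_zero hc.ne' hξ1)

lemma separatrix_reflection_arg_eq (hb2 : b ^ 2 = a ^ 2 - c ^ 2) (ha : a ≠ 0) (hc : c ≠ 0)
    (hξ : ξ ≠ 0) (hξ1 : 1 - ξ ^ 2 ≠ 0)
    (hD : b - a * (2 * ξ / (1 - ξ ^ 2)) * separatrixTan b c ξ ≠ 0) :
    b * (a * (2 * ξ / (1 - ξ ^ 2)) + b * separatrixTan b c ξ)
        / (a * (b - a * (2 * ξ / (1 - ξ ^ 2)) * separatrixTan b c ξ))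
      = ((a - c) * ξ ^ 2 - (a + c)) / (2 * a * ξ) := by
  rw [div_eq_div_iff (mul_ne_zero ha hD) (by positivity)]
  unfold separatrixTan
  field_simp
  linear_combination b * (1 - ξ ^ 4) * hb2

lemma separatrix_fst_relation (ha : a ≠ 0) (hξ : ξ ≠ 0) (hξ' : (a + c) * ξ' = (a - c) * ξ) :
    1 - ξ * ξ' + ((a - c) * ξ ^ 2 - (a + c)) / (2 * a * ξ) * (ξ + ξ') = 0 := by
  field_simp
  linear_combination (-(1 + ξ ^ 2)) * hξ'

lemma separatrix_snd_relation (hb2 : b ^ 2 = a ^ 2 - c ^ 2) (ha : a ≠ 0) (hc : c ≠ 0)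
    (hξ : ξ ≠ 0) (hac : a + c ≠ 0) (hac' : a - c ≠ 0) (hξ' : (a + c) * ξ' = (a - c) * ξ) :
    (b * (1 - ξ ^ 2) / (2 * a * ξ) - separatrixTan b c ξ)
        * (1 - b * (1 - ξ' ^ 2) / (2 * a * ξ') * separatrixTan b c ξ')
      = (1 + b * (1 - ξ ^ 2) / (2 * a * ξ) * separatrixTan b c ξ)
        * (b * (1 - ξ' ^ 2) / (2 * a * ξ') + separatrixTan b c ξ') := by
  obtain rfl : ξ' = (a - c) * ξ / (a + c) := by field_simp; linarith
  unfold separatrixTan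
  field_simp
  rw [hb2]
  ring

lemma focal_ratio_pos (hc : 0 < c) (hca : c < a) : 0 < (a + c) / (a - c) :=
  div_pos (by linarith) (by linarith)

end Algebra

structure IsStaticBilliardMap (a b : ℝ) (Bs : ℝ × ℝ → ℝ × ℝ) : Prop where
  fst_eq : ∀ φ θ : ℝ, cos φ ≠ 0 → cos θ ≠ 0 → b - a * tan φ * tan θ ≠ 0 →
    ∃ k : ℤ, (Bs (φ, θ)).1 = -φ + 2 * arctan (b * (a * tan φ + b * tan θ) /
      (a * (b - a * tan φ * tan θ))) + k * π
  snd_eq : ∀ φ θ : ℝ, cos φ ≠ 0 → cos θ ≠ 0 → b - a * tan φ * tan θ ≠ 0 → sin φ ≠ 0 →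
    cos ((Bs (φ, θ)).1) ≠ 0 → sin ((Bs (φ, θ)).1) ≠ 0 →
    ∃ k : ℤ, (Bs (φ, θ)).2 = -θ + arctan (b / (a * tan φ))
      - arctan (b / (a * tan ((Bs (φ, θ)).1))) + k * π

def OnSeparatrixW2 (b c ξ : ℝ) (p : ℝ × ℝ) : Prop :=
  p.1 ≡ 2 * arctan ξ [PMOD π] ∧ p.2 ≡ arctan (separatrixTan b c ξ) [PMOD π]

namespace IsStaticBilliardMap

variable {a b c ξ ξ' φ θ : ℝ} {Bs : ℝ × ℝ → ℝ × ℝ}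

theorem fst_modEq_of_onSeparatrixW2 (hB : IsStaticBilliardMap a b Bs) (hb : 0 < b)
    (hc : 0 < c) (hca : c < a) (hb2 : b ^ 2 = a ^ 2 - c ^ 2) (hξ : 0 < ξ) (hξ1 : 1 - ξ ^ 2 ≠ 0)
    (hξ' : (a + c) * ξ' = (a - c) * ξ) (hp : OnSeparatrixW2 b c ξ (φ, θ)) :
    (Bs (φ, θ)).1 ≡ 2 * arctan ξ' [PMOD π] := by
  obtain ⟨hφ, hθ⟩ := hp
  have ha : a ≠ 0 := by linarith
  have hD := separatrix_denom_ne_zero hb hc hca hξ hξ1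
  obtain ⟨k, hk⟩ := hB.fst_eq φ θ (cos_ne_zero_of_modEq_two_arctan hφ hξ1)
    (cos_ne_zero_of_modEq_pi hθ (cos_arctan_pos _).ne') (by
      rwa [tan_eq_of_modEq_two_arctan hφ, tan_eq_of_modEq_pi hθ, tan_arctan])
  rw [tan_eq_of_modEq_two_arctan hφ, tan_eq_of_modEq_pi hθ, tan_arctan,
    separatrix_reflection_arg_eq hb2 ha hc.ne' hξ.ne' hξ1 hD] at hk
  calc (Bs (φ, θ)).1
      ≡ -φ + 2 * arctan (((a - c) * ξ ^ 2 - (a + c)) / (2 * a * ξ)) [PMOD π] :=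
        (modEq_pi_iff_exists_eq_add_int_mul.2 ⟨k, hk⟩).symm
    _ ≡ -(2 * arctan ξ) + (2 * arctan ξ + 2 * arctan ξ') [PMOD π] :=
        (neg_modEq_neg.2 hφ).add (two_arctan_modEq_of (separatrix_fst_relation ha hξ.ne' hξ'))
    _ = 2 * arctan ξ' := neg_add_cancel_left _ _

theorem snd_modEq_of_onSeparatrixW2 (hB : IsStaticBilliardMap a b Bs) (hb : 0 < b)
    (hc : 0 < c) (hca : c < a) (hb2 : b ^ 2 = a ^ 2 - c ^ 2) (hξ : 0 < ξ) (hξ1 : 1 - ξ ^ 2 ≠ 0)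
    (hξ'1 : 1 - ξ' ^ 2 ≠ 0) (hξ' : (a + c) * ξ' = (a - c) * ξ)
    (hp : OnSeparatrixW2 b c ξ (φ, θ)) :
    (Bs (φ, θ)).2 ≡ arctan (separatrixTan b c ξ') [PMOD π] := by
  have hφ' := hB.fst_modEq_of_onSeparatrixW2 hb hc hca hb2 hξ hξ1 hξ' hp
  obtain ⟨hφ, hθ⟩ := hp
  have ha : a ≠ 0 := by linarith
  have hξ'0 : ξ' ≠ 0 := by
    rintro rfl
    nlinarith
  have hD := separatrix_denom_ne_zero hb hc hca hξ hξ1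
  obtain ⟨k, hk⟩ := hB.snd_eq φ θ (cos_ne_zero_of_modEq_two_arctan hφ hξ1)
    (cos_ne_zero_of_modEq_pi hθ (cos_arctan_pos _).ne')
    (by rwa [tan_eq_of_modEq_two_arctan hφ, tan_eq_of_modEq_pi hθ, tan_arctan])
    (sin_ne_zero_of_modEq_two_arctan hφ hξ.ne') (cos_ne_zero_of_modEq_two_arctan hφ' hξ'1)
    (sin_ne_zero_of_modEq_two_arctan hφ' hξ'0)
  have hcot : ∀ x : ℝ, x ≠ 0 → b / (a * (2 * x / (1 - x ^ 2))) = b * (1 - x ^ 2) / (2 * a * x) :=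
    fun x hx ↦ by field_simp
  rw [tan_eq_of_modEq_two_arctan hφ, tan_eq_of_modEq_two_arctan hφ', hcot ξ hξ.ne',
    hcot ξ' hξ'0] at hk
  set w := b * (1 - ξ ^ 2) / (2 * a * ξ)
  set w' := b * (1 - ξ' ^ 2) / (2 * a * ξ')
  calc (Bs (φ, θ)).2
      ≡ -θ + arctan w - arctan w' [PMOD π] := (modEq_pi_iff_exists_eq_add_int_mul.2 ⟨k, hk⟩).symm
    _ ≡ -arctan (separatrixTan b c ξ) + arctan w - arctan w' [PMOD π] :=
        ((neg_modEq_neg.2 hθ).add_right _).sub_right _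
    _ = (arctan w - arctan (separatrixTan b c ξ)) - arctan w' := by ring
    _ ≡ (arctan w' + arctan (separatrixTan b c ξ')) - arctan w' [PMOD π] :=
        (arctan_sub_arctan_modEq_of (separatrix_snd_relation hb2 ha hc.ne' hξ.ne'
          (by linarith) (by linarith) hξ')).sub_right _
    _ = arctan (separatrixTan b c ξ') := add_sub_cancel_left _ _

theorem onSeparatrixW2_apply {lam : ℝ} (hB : IsStaticBilliardMap a b Bs) (hcont : Continuous Bs)
    (hb : 0 < b) (hc : 0 < c) (hca : c < a) (hb2 : b ^ 2 = a ^ 2 - c ^ 2)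
    (hlam : lam = (a + c) / (a - c)) (hξ : 0 < ξ) {p : ℝ × ℝ} (hp : OnSeparatrixW2 b c ξ p) :
    OnSeparatrixW2 b c (ξ / lam) (Bs p) := by
  have hlam0 : 0 < lam := hlam ▸ focal_ratio_pos hc hca
  have hrel (x : ℝ) : (a + c) * (x / lam) = (a - c) * x := by
    rw [hlam]; field_simp [(by linarith : a - c ≠ 0), (by linarith : a + c ≠ 0)]
  have hsq {x : ℝ} (hx : 0 < x) (hx1 : x ≠ 1) : 1 - x ^ 2 ≠ 0 :=
    sub_ne_zero.2 fun h ↦ hx1 ((pow_eq_one_iff_of_nonneg hx.le two_ne_zero).1 h.symm)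
  obtain ⟨k, hk⟩ := modEq_pi_iff_exists_eq_add_int_mul.1 hp.1.symm
  obtain ⟨l, hl⟩ := modEq_pi_iff_exists_eq_add_int_mul.1 hp.2.symm
  set F : ℝ → ℝ × ℝ := fun x ↦ (2 * arctan x + k * π, arctan (separatrixTan b c x) + l * π)
  obtain rfl : p = F ξ := Prod.ext hk hl
  have hF : ContinuousAt (Bs ∘ F) ξ := by
    refine hcont.continuousAt.comp (ContinuousAt.prodMk (by fun_prop) ?_)
    unfold separatrixTan
    exact (continuousAt_arctan.comp (by fun_prop (disch := positivity))).add continuousAt_const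
  have hgen : ∀ᶠ x in 𝓝[≠] ξ, OnSeparatrixW2 b c (x / lam) (Bs (F x)) := by
    filter_upwards [nhdsWithin_le_nhds (eventually_gt_nhds hξ),
      nhdsNE_le_cofinite ξ (eventually_cofinite_ne 1),
      nhdsNE_le_cofinite ξ (eventually_cofinite_ne lam)] with x hx hx1 hxlam
    have hFx : OnSeparatrixW2 b c x (F x) :=
      ⟨(modEq_pi_iff_exists_eq_add_int_mul.2 ⟨k, rfl⟩).symm,
        (modEq_pi_iff_exists_eq_add_int_mul.2 ⟨l, rfl⟩).symm⟩
    have hx'1 : 1 - (x / lam) ^ 2 ≠ 0 :=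
      hsq (div_pos hx hlam0) fun h ↦ hxlam ((div_eq_one_iff_eq hlam0.ne').1 h)
    exact ⟨hB.fst_modEq_of_onSeparatrixW2 hb hc hca hb2 hx (hsq hx hx1) (hrel x) hFx,
      hB.snd_modEq_of_onSeparatrixW2 hb hc hca hb2 hx (hsq hx hx1) hx'1 (hrel x) hFx⟩
  refine ⟨modEq_pi_of_eventually_nhdsNE hF.fst (by fun_prop) (hgen.mono fun _ h ↦ h.1),
    modEq_pi_of_eventually_nhdsNE hF.snd ?_ (hgen.mono fun _ h ↦ h.2)⟩
  unfold separatrixTan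
  exact continuousAt_arctan.comp (by fun_prop (disch := positivity))

theorem onSeparatrixW2_iterate {lam : ℝ} (hB : IsStaticBilliardMap a b Bs)
    (hcont : Continuous Bs) (hb : 0 < b) (hc : 0 < c) (hca : c < a) (hb2 : b ^ 2 = a ^ 2 - c ^ 2)
    (hlam : lam = (a + c) / (a - c)) (hξ : 0 < ξ) {p : ℝ × ℝ} (hp : OnSeparatrixW2 b c ξ p)
    (n : ℕ) : OnSeparatrixW2 b c (lam ^ (-(n : ℤ)) * ξ) (Bs^[n] p) := by
  have hlam0 : 0 < lam := hlam ▸ focal_ratio_pos hc hca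
  induction n with
  | zero => simpa using hp
  | succ n ih =>
    rw [Function.iterate_succ_apply']
    convert hB.onSeparatrixW2_apply hcont hb hc hca hb2 hlam
      (mul_pos (zpow_pos hlam0 _) hξ) ih using 2
    rw [Nat.cast_succ, neg_add, zpow_add₀ hlam0.ne', zpow_neg_one]
    ring

end IsStaticBilliardMap

/-- STATEMENT 1: dynamics of the static elliptic billiard map `B_s` on the separatrix
branch `W₂` (trajectories through the focus `(−c, 0)`).  `Bs` is any (continuous
extension of the) map given, modulo `π`, by the defining formulas of the static
elliptic billiard map.  Starting from `φ₀ = 2 arctan ξ₀` with `ξ₀ > 0` and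
`θ₀ ∈ (0, π/2)` the unique angle with `tan θ₀ = b(1+ξ₀²)/(2cξ₀)`, the `n`-th iterate
equals, modulo `π`, `(φ_n, θ_n)` with `φ_n = 2 arctan (λ⁻ⁿ ξ₀)` and `θ_n ∈ (0, π/2)`
the unique angle with `tan θ_n = b(1+λ^{−2n}ξ₀²)/(2cλ⁻ⁿξ₀)`. -/
theorem separatrix_W2_dynamics
    (a b : ℝ) (hb : 0 < b) (hab : b < a)
    (c lam : ℝ) (hc : c = Real.sqrt (a ^ 2 - b ^ 2)) (hlam : lam = (a + c) / (a - c))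
    (Bs : ℝ × ℝ → ℝ × ℝ) (hcont : Continuous Bs)
    (hBs1 : ∀ φ θ : ℝ, Real.cos φ ≠ 0 → Real.cos θ ≠ 0 →
      b - a * Real.tan φ * Real.tan θ ≠ 0 →
      ∃ k : ℤ, (Bs (φ, θ)).1 = -φ + 2 * Real.arctan (b * (a * Real.tan φ + b * Real.tan θ) /
        (a * (b - a * Real.tan φ * Real.tan θ))) + k * Real.pi)
    (hBs2 : ∀ φ θ : ℝ, Real.cos φ ≠ 0 → Real.cos θ ≠ 0 →
      b - a * Real.tan φ * Real.tan θ ≠ 0 → Real.sin φ ≠ 0 →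
      Real.cos ((Bs (φ, θ)).1) ≠ 0 → Real.sin ((Bs (φ, θ)).1) ≠ 0 →
      ∃ k : ℤ, (Bs (φ, θ)).2 = -θ + Real.arctan (b / (a * Real.tan φ))
        - Real.arctan (b / (a * Real.tan ((Bs (φ, θ)).1))) + k * Real.pi)
    (ξ₀ : ℝ) (hξ₀ : 0 < ξ₀)
    (φ₀ θ₀ : ℝ) (hφ₀ : φ₀ = 2 * Real.arctan ξ₀)
    (hθ₀mem : θ₀ ∈ Set.Ioo 0 (Real.pi / 2))
    (hθ₀ : Real.tan θ₀ = b * (1 + ξ₀ ^ 2) / (2 * c * ξ₀)) :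
    ∀ n : ℕ, ∃ θn ∈ Set.Ioo 0 (Real.pi / 2),
      Real.tan θn = b * (1 + (lam ^ (-(n : ℤ)) * ξ₀) ^ 2) / (2 * c * (lam ^ (-(n : ℤ)) * ξ₀)) ∧
      ∃ k l : ℤ, Bs^[n] (φ₀, θ₀) =
        (2 * Real.arctan (lam ^ (-(n : ℤ)) * ξ₀) + k * Real.pi, θn + l * Real.pi) := by
  intro n
  have hc0 : 0 < c := hc ▸ sqrt_pos.2 (by nlinarith)
  have hb2 : b ^ 2 = a ^ 2 - c ^ 2 := by rw [hc, sq_sqrt (by nlinarith)]; ring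
  have hca : c < a := by nlinarith
  have hp : OnSeparatrixW2 b c ξ₀ (φ₀, θ₀) := by
    refine ⟨hφ₀ ▸ modEq_rfl, ?_⟩
    rw [separatrixTan, ← hθ₀, arctan_tan (by linarith [hθ₀mem.1, pi_pos]) hθ₀mem.2]
  obtain ⟨hφn, hθn⟩ :=
    IsStaticBilliardMap.onSeparatrixW2_iterate ⟨hBs1, hBs2⟩ hcont hb hc0 hca hb2 hlam hξ₀ hp n
  obtain ⟨k, hk⟩ := modEq_pi_iff_exists_eq_add_int_mul.1 hφn.symm
  obtain ⟨l, hl⟩ := modEq_pi_iff_exists_eq_add_int_mul.1 hθn.symm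
  have hξn : 0 < lam ^ (-(n : ℤ)) * ξ₀ :=
    mul_pos (zpow_pos (hlam ▸ focal_ratio_pos hc0 hca) _) hξ₀
  refine ⟨arctan (separatrixTan b c (lam ^ (-(n : ℤ)) * ξ₀)),
    ⟨arctan_pos.2 (by unfold separatrixTan; positivity), arctan_lt_pi_div_two _⟩,
    tan_arctan _, k, l, Prod.ext hk hl⟩
end

section
/- Time component of the truncated scattering map (formula (40)): let a > b > 0 be constants, c = sqrt(a² − b²), λ = (a+c)/(a−c). For ξ₀ > 0 put ξ_n = λⁿ ξ₀ for n ∈ ℤ. Then the series ∑_{n ∈ ℤ} [ 2a − 2a (λ + ξ_n²)² / ( (λ² + ξ_n²)(1 + ξ_n²) ) ] converges absolutely and its sum equals 2c. (Equivalently: the total defect between the homoclinic flight lengths and the period-two flight length 2a equals 2c, twice the focal half-distance.) -/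
/-!
Since `a (λ - 1) = c (λ + 1)`, the defect `2a - 2a(λ + ξ²)² / ((λ² + ξ²)(1 + ξ²))` equals
`w (ξ / λ) - w ξ` with `w x = 2c / (1 + x²)`. Along `ξ_n = λⁿ ξ₀` the series therefore telescopes,
with nonnegative terms because `w` decreases on `[0, ∞)`, and its sum is the difference of the
limits of `w ξ_n` at `n → -∞` (where `ξ_n → 0`) and at `n → ∞` (where `ξ_n → ∞`): `2c - 0`.
-/

open Filter Topology

theorem Antitone.hasSum_sub_succ {f : ℕ → ℝ} {l : ℝ} (hf : Antitone f)
    (hl : Tendsto f atTop (𝓝 l)) : HasSum (fun n ↦ f n - f (n + 1)) (f 0 - l) := by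
  rw [hasSum_iff_tendsto_nat_of_nonneg fun n ↦ sub_nonneg.2 (hf n.le_succ)]
  simp_rw [Finset.sum_range_sub']
  exact tendsto_const_nhds.sub hl

theorem Antitone.hasSum_int_sub_succ {f : ℤ → ℝ} {L l : ℝ} (hf : Antitone f)
    (hL : Tendsto f atBot (𝓝 L)) (hl : Tendsto f atTop (𝓝 l)) :
    HasSum (fun n ↦ f n - f (n + 1)) (L - l) := by
  have hpos : HasSum (fun n : ℕ ↦ f n - f (n + 1)) (f 0 - l) := by
    have := (hf.comp_monotone Nat.mono_cast).hasSum_sub_succ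
      (hl.comp tendsto_natCast_atTop_atTop)
    simpa [Function.comp_def] using this
  have hneg : HasSum (fun n : ℕ ↦ f (-(n + 1)) - f (-(n + 1) + 1)) (L - f 0) := by
    have hanti : Antitone fun n : ℕ ↦ -f (-n) := fun m n hmn ↦
      neg_le_neg (hf (neg_le_neg (Nat.cast_le.2 hmn)))
    have hlim : Tendsto (fun n : ℕ ↦ -f (-n)) atTop (𝓝 (-L)) :=
      (hL.comp (tendsto_neg_atTop_atBot.comp tendsto_natCast_atTop_atTop)).neg
    convert hanti.hasSum_sub_succ hlim using 1
    · ext n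
      rw [show -((n : ℤ) + 1) + 1 = -n by ring]
      push_cast
      ring
    · simp only [Nat.cast_zero, neg_zero]
      ring
  have := hpos.of_nat_of_neg_add_one (f := fun n ↦ f n - f (n + 1)) hneg
  rwa [show f 0 - l + (L - f 0) = L - l by ring] at this

theorem tendsto_zpow_atTop_atTop_of_one_lt {r : ℝ} (hr : 1 < r) :
    Tendsto (fun n : ℤ ↦ r ^ n) atTop atTop := by
  simpa [Function.comp_def, Real.rpow_intCast] using
    (tendsto_rpow_atTop_of_base_gt_one r hr).comp tendsto_intCast_atTop_atTop

theorem tendsto_zpow_atBot_zero_of_one_lt {r : ℝ} (hr : 1 < r) :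
    Tendsto (fun n : ℤ ↦ r ^ n) atBot (𝓝 0) := by
  simpa [Function.comp_def, Real.rpow_intCast] using
    (tendsto_rpow_atBot_of_base_gt_one r hr).comp (tendsto_intCast_atBot_iff.2 tendsto_id)

theorem antitone_div_one_add_zpow_mul_sq {k r η : ℝ} (hk : 0 ≤ k) (hr : 1 ≤ r) (hη : 0 ≤ η) :
    Antitone fun n : ℤ ↦ k / (1 + (r ^ n * η) ^ 2) := fun m n hmn ↦ by
  have hm : 0 ≤ r ^ m * η := mul_nonneg (zpow_nonneg (by linarith) m) hη
  have hmn : r ^ m * η ≤ r ^ n * η :=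
    mul_le_mul_of_nonneg_right (zpow_le_zpow_right₀ hr hmn) hη
  dsimp only
  exact div_le_div_of_nonneg_left hk (by positivity) (by gcongr)

theorem tendsto_div_one_add_zpow_mul_sq_atTop {k r η : ℝ} (hr : 1 < r) (hη : 0 < η) :
    Tendsto (fun n : ℤ ↦ k / (1 + (r ^ n * η) ^ 2)) atTop (𝓝 0) := by
  have h := (tendsto_zpow_atTop_atTop_of_one_lt hr).atTop_mul_const hη
  exact tendsto_const_nhds.div_atTop <| tendsto_atTop_add_const_left _ 1 <|
    (tendsto_pow_atTop two_ne_zero).comp h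

theorem tendsto_div_one_add_zpow_mul_sq_atBot {k r η : ℝ} (hr : 1 < r) :
    Tendsto (fun n : ℤ ↦ k / (1 + (r ^ n * η) ^ 2)) atBot (𝓝 k) := by
  have h : Tendsto (fun n : ℤ ↦ 1 + (r ^ n * η) ^ 2) atBot (𝓝 1) := by
    simpa using (((tendsto_zpow_atBot_zero_of_one_lt hr).mul_const η).pow 2).const_add 1
  simpa only [div_one, Pi.div_def] using tendsto_const_nhds.div h one_ne_zero

theorem mul_sub_one_eq_mul_add_one {a c lam : ℝ} (hac : a ≠ c) (hlam : lam = (a + c) / (a - c)) :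
    a * (lam - 1) = c * (lam + 1) := by
  rw [hlam]
  field_simp [sub_ne_zero.2 hac]
  ring

theorem two_mul_sub_chord_eq {a c lam : ℝ} (hac : a ≠ c) (hlam : lam = (a + c) / (a - c))
    (hl : lam ≠ 0) (x : ℝ) :
    2 * a - 2 * a * (lam + x ^ 2) ^ 2 / ((lam ^ 2 + x ^ 2) * (1 + x ^ 2))
      = 2 * c / (1 + (x / lam) ^ 2) - 2 * c / (1 + x ^ 2) := by
  have : lam ^ 2 + x ^ 2 ≠ 0 := by positivity
  field_simp
  linear_combination x ^ 2 * (lam - 1) * mul_sub_one_eq_mul_add_one hac hlam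

/-- time component of the truncated scattering map.  With
`ξ_n = λⁿ ξ₀`, the series `∑_{n ∈ ℤ} [ 2a − 2a(λ+ξ_n²)²/((λ²+ξ_n²)(1+ξ_n²)) ]`
converges absolutely and its sum equals `2c`: the total defect between the
homoclinic flight lengths and the period-two flight length `2a` is twice the
focal half-distance. -/
theorem scattering_map_time_component
    (a b : ℝ) (hb : 0 < b) (hab : b < a)
    (c lam : ℝ) (hc : c = Real.sqrt (a ^ 2 - b ^ 2)) (hlam : lam = (a + c) / (a - c))
    (ξ₀ : ℝ) (hξ₀ : 0 < ξ₀) :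
    Summable (fun n : ℤ =>
      |2 * a - 2 * a * (lam + (lam ^ n * ξ₀) ^ 2) ^ 2 /
        ((lam ^ 2 + (lam ^ n * ξ₀) ^ 2) * (1 + (lam ^ n * ξ₀) ^ 2))|) ∧
    ∑' n : ℤ,
      (2 * a - 2 * a * (lam + (lam ^ n * ξ₀) ^ 2) ^ 2 /
        ((lam ^ 2 + (lam ^ n * ξ₀) ^ 2) * (1 + (lam ^ n * ξ₀) ^ 2)))
      = 2 * c := by
  have hc0 : 0 < c := hc ▸ Real.sqrt_pos.2 (by nlinarith)
  have hca : c < a := by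
    rw [hc, Real.sqrt_lt' (hb.trans hab)]
    nlinarith
  have hlam1 : 1 < lam := by
    rw [hlam, one_lt_div (by linarith)]
    linarith
  have hlam0 : lam ≠ 0 := by positivity
  set v : ℤ → ℝ := fun n ↦ 2 * c / (1 + (lam ^ n * (ξ₀ / lam)) ^ 2)
  have hterm : ∀ n : ℤ, 2 * a - 2 * a * (lam + (lam ^ n * ξ₀) ^ 2) ^ 2 /
      ((lam ^ 2 + (lam ^ n * ξ₀) ^ 2) * (1 + (lam ^ n * ξ₀) ^ 2)) = v n - v (n + 1) := by
    intro n
    rw [two_mul_sub_chord_eq hca.ne' hlam hlam0]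
    simp only [v, zpow_add_one₀ hlam0, mul_assoc, mul_div_cancel₀ _ hlam0, mul_div_assoc]
  have hsum : HasSum (fun n ↦ v n - v (n + 1)) (2 * c - 0) :=
    (antitone_div_one_add_zpow_mul_sq (by positivity) hlam1.le (by positivity)).hasSum_int_sub_succ
      (tendsto_div_one_add_zpow_mul_sq_atBot hlam1)
      (tendsto_div_one_add_zpow_mul_sq_atTop hlam1 (by positivity))
  simp_rw [hterm]
  exact ⟨summable_abs_iff.2 hsum.summable, by simpa using hsum.tsum_eq⟩
end
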